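/- If the submatrix 𝓛_f of the normalized Laplacian restricted to a proper nonempty subset f of vertices of a connected graph is taken, then 𝓛_f is positive definite and hence invertible. -/

import Mathlib

/-! `𝓛_f` is the congruence of the principal submatrix `L_f` of the combinatorial Laplacian
`L = D - A` by the invertible diagonal matrix `D_f^{-1/2}`, so it suffices that `L_f` is positive
definite. The quadratic form of `L_f` at `x` is that of `L` at the extension of `x` by zero, which
is nonnegative and vanishes only if `L` kills that extension. On a connected graph such a vector
is constant, and it vanishes at a vertex outside `f`, hence everywhere. -/

open Matrix
open scoped ComplexOrder

namespace Matrix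

variable {m n : Type*} [Fintype m]

theorem PosSemidef.posDef_conjTranspose_mul_mul {𝕜 : Type*} [RCLike 𝕜] [Fintype n]
    {A : Matrix n n 𝕜} (hA : A.PosSemidef) {B : Matrix n m 𝕜}
    (hker : ∀ x, A *ᵥ (B *ᵥ x) = 0 → x = 0) :
    (Bᴴ * A * B).PosDef := by
  refine .of_dotProduct_mulVec_pos (isHermitian_conjTranspose_mul_mul B hA.1) fun x hx => ?_
  have hform : star x ⬝ᵥ (Bᴴ * A * B) *ᵥ x = star (B *ᵥ x) ⬝ᵥ A *ᵥ (B *ᵥ x) := by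
    simp only [star_mulVec, dotProduct_mulVec, vecMul_vecMul, ← mulVec_mulVec]
  rw [hform]
  refine (hA.dotProduct_mulVec_nonneg _).lt_of_ne fun h => hx (hker x ?_)
  exact (hA.dotProduct_mulVec_zero_iff _).1 h.symm

theorem PosDef.diagonal_mul_mul_diagonal {K : Type*} [Field K] [PartialOrder K] [StarRing K]
    [TrivialStar K] [DecidableEq m] {M : Matrix m m K} (hM : M.PosDef) {d : m → K}
    (hd : ∀ i, d i ≠ 0) : (diagonal d * M * diagonal d).PosDef := by
  have hunit : IsUnit (diagonal d) := isUnit_diagonal.2 (Pi.isUnit_iff.2 fun i => (hd i).isUnit)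
  simpa [diagonal_conjTranspose] using
    hM.conjTranspose_mul_mul_same (mulVec_injective_of_isUnit hunit)

theorem submatrix_diagonal_mul_mul_diagonal {α : Type*} [CommRing α] [Fintype n] [DecidableEq n]
    [DecidableEq m] (d : n → α) (M : Matrix n n α) (e : m → n) :
    (diagonal d * M * diagonal d).submatrix e e =
      diagonal (d ∘ e) * M.submatrix e e * diagonal (d ∘ e) := by
  ext i j
  simp [diagonal_mul, mul_diagonal]

theorem one_submatrix_mulVec_apply_self {R : Type*} [NonAssocSemiring R] [DecidableEq n]
    {e : m → n} (he : e.Injective) (x : m → R) (i : m) :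
    ((1 : Matrix n n R).submatrix id e *ᵥ x) (e i) = x i := by
  classical
  simp [mulVec, dotProduct, one_apply, he.eq_iff]

theorem one_submatrix_mulVec_apply_of_notMem_range {R : Type*} [NonAssocSemiring R]
    [DecidableEq n] {e : m → n} (x : m → R) {v : n} (hv : v ∉ Set.range e) :
    ((1 : Matrix n n R).submatrix id e *ᵥ x) v = 0 := by
  simp only [mulVec, dotProduct, submatrix_apply, id, one_apply]
  exact Finset.sum_eq_zero fun i _ => by rw [if_neg fun h => hv ⟨i, h.symm⟩, zero_mul]

end Matrix

namespace SimpleGraph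

variable {V ι : Type*} [Fintype V] [DecidableEq V] [Fintype ι] {G : SimpleGraph V}
  [DecidableRel G.Adj]

theorem posDef_lapMatrix_submatrix (hG : G.Connected) {e : ι → V} (he : e.Injective)
    (hnotsurj : ¬ e.Surjective) : ((G.lapMatrix ℝ).submatrix e e).PosDef := by
  obtain ⟨v, hv⟩ := not_forall.1 hnotsurj
  -- `P *ᵥ x` is the extension of `x` by zero
  set P : Matrix V ι ℝ := (1 : Matrix V V ℝ).submatrix id e
  have hP : (G.lapMatrix ℝ).submatrix e e = Pᴴ * G.lapMatrix ℝ * P := by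
    ext
    simp [P, mul_apply, one_apply]
  rw [hP]
  refine (G.posSemidef_lapMatrix ℝ).posDef_conjTranspose_mul_mul fun x hx => funext fun i => ?_
  have hconst := (G.lapMatrix_mulVec_eq_zero_iff_forall_reachable).1 hx
  calc x i = (P *ᵥ x) (e i) := (one_submatrix_mulVec_apply_self he x i).symm
    _ = (P *ᵥ x) v := hconst _ _ (hG.preconnected _ _)
    _ = 0 := one_submatrix_mulVec_apply_of_notMem_range x hv

end SimpleGraph

theorem restricted_laplacian_posdef_general
    (n : ℕ) (G : SimpleGraph (Fin n)) [DecidableRel G.Adj]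
    (hconn : G.Connected) (hdeg : ∀ i, 0 < G.degree i)
    (f : Finset (Fin n)) (hproper : f ≠ Finset.univ) :
    let A : Matrix (Fin n) (Fin n) ℝ := G.adjMatrix ℝ
    let D : Matrix (Fin n) (Fin n) ℝ := Matrix.diagonal fun i => (G.degree i : ℝ)
    let DnegHalf : Matrix (Fin n) (Fin n) ℝ :=
      Matrix.diagonal fun i => (Real.sqrt (G.degree i : ℝ))⁻¹
    let 𝓛 : Matrix (Fin n) (Fin n) ℝ := DnegHalf * (D - A) * DnegHalf
    let 𝓛f : Matrix {i // i ∈ f} {i // i ∈ f} ℝ :=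
      𝓛.submatrix (fun i => (i : Fin n)) (fun i => (i : Fin n))
    𝓛f.PosDef ∧ IsUnit 𝓛f := by
  intro A D DnegHalf 𝓛 𝓛f
  have hnotsurj : ¬ Function.Surjective ((↑) : {i // i ∈ f} → Fin n) := fun h =>
    hproper (Finset.eq_univ_iff_forall.2 fun v => by obtain ⟨i, rfl⟩ := h v; exact i.2)
  have hpd : 𝓛f.PosDef := by
    -- `D - A` is `G.lapMatrix ℝ` by definition
    rw [show 𝓛f = _ from submatrix_diagonal_mul_mul_diagonal _ (G.lapMatrix ℝ) _]
    exact (SimpleGraph.posDef_lapMatrix_submatrix hconn Subtype.coe_injective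
      hnotsurj).diagonal_mul_mul_diagonal fun i =>
        inv_ne_zero (Real.sqrt_pos.2 (Nat.cast_pos.2 (hdeg i))).ne'
  exact ⟨hpd, hpd.isUnit⟩

theorem restricted_laplacian_posdef
    (n : ℕ) (G : SimpleGraph (Fin n)) [DecidableRel G.Adj]
    (hconn : G.Connected) (hdeg : ∀ i, 0 < G.degree i)
    (f : Finset (Fin n)) (hne : f.Nonempty) (hproper : f ≠ Finset.univ) :
    let A : Matrix (Fin n) (Fin n) ℝ := G.adjMatrix ℝ
    let D : Matrix (Fin n) (Fin n) ℝ := Matrix.diagonal fun i => (G.degree i : ℝ)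
    let DnegHalf : Matrix (Fin n) (Fin n) ℝ :=
      Matrix.diagonal fun i => (Real.sqrt (G.degree i : ℝ))⁻¹
    let 𝓛 : Matrix (Fin n) (Fin n) ℝ := DnegHalf * (D - A) * DnegHalf
    let 𝓛f : Matrix {i // i ∈ f} {i // i ∈ f} ℝ :=
      𝓛.submatrix (fun i => (i : Fin n)) (fun i => (i : Fin n))
    𝓛f.PosDef ∧ IsUnit 𝓛f :=
  restricted_laplacian_posdef_general n G hconn hdeg f hproper
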